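/- Let T N : ℕ with 0 < T * N, and let γ be the standard Gaussian measure on the trajectory space X = Fin T → Fin N → EuclideanSpace ℝ (Fin 3), i.e., the product over all frames τ, nodes i, and coordinates d of the real Gaussian measure gaussianReal 0 1. Let P be the centering map (P x) τ i = x τ i - x̄ with x̄ = (1 / (T * N)) • ∑ τ, ∑ i, x τ i. Then the restricted Gaussian Measure.map P γ is invariant under simultaneous rotations: for every R ∈ Matrix.specialOrthogonalGroup (Fin 3) ℝ, Measure.map (fun x => fun τ i => R.mulVec (x τ i)) (Measure.map P γ) = Measure.map P γ. -/

import Mathlib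

/-! The standard Gaussian on `ℝ³` is the basis-free `stdGaussian`, which every linear
isometry preserves; hence rotating every node preserves the product measure `γ`. Rotations are
linear, so they commute with the centering map `P`, and therefore also preserve `P₊γ`. -/

open MeasureTheory ProbabilityTheory

/-- The standard Gaussian measure on `EuclideanSpace ℝ (Fin 3)`: the product over the
three coordinates of the real standard Gaussian `gaussianReal 0 1`. -/
noncomputable def stdGaussianE3 : Measure (EuclideanSpace ℝ (Fin 3)) :=
  Measure.map (MeasurableEquiv.toLp 2 (Fin 3 → ℝ))
    (Measure.pi fun _ : Fin 3 => gaussianReal 0 1)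

/-- The standard Gaussian measure on the trajectory space
`X = Fin T → Fin N → EuclideanSpace ℝ (Fin 3)`: the product over all frames, nodes, and
coordinates of `gaussianReal 0 1`. -/
noncomputable def stdGaussianTraj (T N : ℕ) :
    Measure (Fin T → Fin N → EuclideanSpace ℝ (Fin 3)) :=
  Measure.pi fun _ : Fin T => Measure.pi fun _ : Fin N => stdGaussianE3

/-- The centering map `(P x) τ i = x τ i - x̄`, where
`x̄ = (1 / (T * N)) • ∑ τ, ∑ i, x τ i`. -/
noncomputable def centerProj {T N : ℕ}
    (x : Fin T → Fin N → EuclideanSpace ℝ (Fin 3)) :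
    Fin T → Fin N → EuclideanSpace ℝ (Fin 3) :=
  fun τ i => x τ i - (1 / ((T : ℝ) * (N : ℝ))) • ∑ τ', ∑ i', x τ' i'

open Matrix

theorem measurePreserving_stdGaussian {E : Type*} [NormedAddCommGroup E] [InnerProductSpace ℝ E]
    [FiniteDimensional ℝ E] [MeasurableSpace E] [BorelSpace E] (f : E ≃ₗᵢ[ℝ] E) :
    MeasurePreserving f (stdGaussian E) (stdGaussian E) :=
  ⟨f.continuous.measurable, stdGaussian_map f⟩

noncomputable def Matrix.orthogonalGroup.toLinearIsometryEquiv {n : Type*} [Fintype n]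
    [DecidableEq n] {R : Matrix n n ℝ} (hR : R ∈ orthogonalGroup n ℝ) :
    EuclideanSpace ℝ n ≃ₗᵢ[ℝ] EuclideanSpace ℝ n :=
  Unitary.linearIsometryEquiv ⟨toEuclideanCLM (n := n) (𝕜 := ℝ) R, Unitary.map_mem _ hR⟩

theorem stdGaussianE3_eq_stdGaussian : stdGaussianE3 = stdGaussian (EuclideanSpace ℝ (Fin 3)) :=
  map_pi_eq_stdGaussian

instance : IsProbabilityMeasure stdGaussianE3 :=
  stdGaussianE3_eq_stdGaussian ▸ inferInstance

theorem measurable_centerProj {T N : ℕ} : Measurable (centerProj (T := T) (N := N)) := by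
  unfold centerProj
  fun_prop

theorem centerProj_map_linearMap {T N : ℕ}
    (L : EuclideanSpace ℝ (Fin 3) →ₗ[ℝ] EuclideanSpace ℝ (Fin 3))
    (x : Fin T → Fin N → EuclideanSpace ℝ (Fin 3)) :
    centerProj (fun τ i => L (x τ i)) = fun τ i => L (centerProj x τ i) := by
  ext1 τ
  ext1 i
  simp only [centerProj, map_sub, map_smul, map_sum]

theorem stmt10 (T N : ℕ) :
    ∀ R ∈ Matrix.specialOrthogonalGroup (Fin 3) ℝ,
      Measure.map
          (fun x : Fin T → Fin N → EuclideanSpace ℝ (Fin 3) =>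
            fun τ i => (EuclideanSpace.equiv (Fin 3) ℝ).symm (R.mulVec (x τ i)))
          (Measure.map centerProj (stdGaussianTraj T N))
        = Measure.map centerProj (stdGaussianTraj T N) := by
  intro R hR
  set ρ := orthogonalGroup.toLinearIsometryEquiv (mem_specialOrthogonalGroup_iff.mp hR).1
  have hρ : MeasurePreserving ρ stdGaussianE3 stdGaussianE3 :=
    stdGaussianE3_eq_stdGaussian ▸ measurePreserving_stdGaussian ρ
  have hγ : MeasurePreserving (fun x : Fin T → Fin N → _ => fun τ i => ρ (x τ i))
      (stdGaussianTraj T N) (stdGaussianTraj T N) :=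
    measurePreserving_pi _ _ fun _ => measurePreserving_pi _ _ fun _ => hρ
  exact (measurable_centerProj.measurePreserving _ |>.of_semiconj hγ
    (fun x => centerProj_map_linearMap ρ.toLinearMap x) hγ.measurable).map_eq
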